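/- Let P be a probability premeasure on a premeasurable space X and let (f_n : X → [0,1]) be a sequence of premeasurable maps such that f := ∑_{n=1}^∞ f_n is also a premeasurable map into [0,1]. Then I_P(f) = ∑_{n=1}^∞ I_P(f_n). -/

import Mathlib

open Set

variable {X : Type*}

/-- An algebra of subsets of `X`: contains `univ`, closed under complements and
finite intersections. -/
structure IsSetAlg (B : Set (Set X)) : Prop where
  univ_mem : Set.univ ∈ B
  compl_mem : ∀ A ∈ B, Aᶜ ∈ B
  inter_mem : ∀ A ∈ B, ∀ C ∈ B, A ∩ C ∈ B

/-- The value of the simple function `∑ k, a k • 1_{A k}`. -/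
noncomputable def simpleVal {n : ℕ} (a : Fin n → ℝ) (A : Fin n → Set X) : X → ℝ :=
  fun x => ∑ k, a k * (A k).indicator (fun _ => (1 : ℝ)) x

/-- `(a, A)` is a representation of `s` as a simple function for the algebra `B`. -/
def IsRepOf (B : Set (Set X)) (s : X → ℝ) {n : ℕ}
    (a : Fin n → ℝ) (A : Fin n → Set X) : Prop :=
  (∀ k, a k ∈ Set.Icc (0 : ℝ) 1) ∧ (∀ k, A k ∈ B) ∧ s = simpleVal a A

/-- A simple function on the premeasurable space `(X, B)`. -/
def IsSimple (B : Set (Set X)) (s : X → ℝ) : Prop :=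
  ∃ (n : ℕ) (a : Fin n → ℝ) (A : Fin n → Set X), IsRepOf B s a A

/-- The elementary integral of a simple function given by a representation. -/
def JRep (P : Set X → ℝ) {n : ℕ} (a : Fin n → ℝ) (A : Fin n → Set X) : ℝ :=
  ∑ k, a k * P (A k)

/-- Membership in the algebra of sets generated by `S`. -/
inductive InGenAlg (S : Set (Set ℝ)) : Set ℝ → Prop
  | basic : ∀ s ∈ S, InGenAlg S s
  | univ : InGenAlg S Set.univ
  | compl : ∀ s, InGenAlg S s → InGenAlg S sᶜ
  | inter : ∀ s t, InGenAlg S s → InGenAlg S t → InGenAlg S (s ∩ t)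

/-- A premeasurable map `X → [0,1]`: preimages of sets in the algebra generated
by open intervals lie in `B`. -/
def PreMble (B : Set (Set X)) (f : X → ℝ) : Prop :=
  (∀ x, f x ∈ Set.Icc (0 : ℝ) 1) ∧
  ∀ T : Set ℝ, InGenAlg {I | ∃ a b : ℝ, I = Set.Ioo a b} T → f ⁻¹' T ∈ B

/-- A finitely additive probability premeasure on the algebra `B`. -/
structure IsFinAddProb (B : Set (Set X)) (P : Set X → ℝ) : Prop where
  mem_Icc : ∀ A ∈ B, P A ∈ Set.Icc (0 : ℝ) 1
  univ_one : P Set.univ = 1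
  add : ∀ A ∈ B, ∀ C ∈ B, Disjoint A C → P (A ∪ C) = P A + P C

/-- A (countably additive) probability premeasure on the algebra `B`. -/
structure IsProbPre (B : Set (Set X)) (P : Set X → ℝ) : Prop where
  mem_Icc : ∀ A ∈ B, P A ∈ Set.Icc (0 : ℝ) 1
  univ_one : P Set.univ = 1
  countably_add : ∀ A : ℕ → Set X, (∀ n, A n ∈ B) →
    (∀ m n, m ≠ n → Disjoint (A m) (A n)) → (⋃ n, A n) ∈ B →
    HasSum (fun n => P (A n)) (P (⋃ n, A n))

/-- `I_P f`: the supremum of elementary integrals of simple functions below `f`. -/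
noncomputable def Ilow (B : Set (Set X)) (P : Set X → ℝ) (f : X → ℝ) : ℝ :=
  sSup {r | ∃ (n : ℕ) (a : Fin n → ℝ) (A : Fin n → Set X),
    (∀ k, a k ∈ Set.Icc (0 : ℝ) 1) ∧ (∀ k, A k ∈ B) ∧
    (∀ x, simpleVal a A x ≤ f x) ∧ r = JRep P a A}

open MeasureTheory Filter Topology ENNReal

namespace IlowAux

variable {B : Set (Set X)} {P : Set X → ℝ}

lemma empty_mem (hB : IsSetAlg B) : (∅ : Set X) ∈ B := by
  simpa using hB.compl_mem _ hB.univ_mem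

lemma union_mem (hB : IsSetAlg B) {A C : Set X} (hA : A ∈ B) (hC : C ∈ B) :
    A ∪ C ∈ B := by
  have := hB.compl_mem _ (hB.inter_mem _ (hB.compl_mem _ hA) _ (hB.compl_mem _ hC))
  simpa [Set.compl_inter] using this

lemma diff_mem (hB : IsSetAlg B) {A C : Set X} (hA : A ∈ B) (hC : C ∈ B) :
    A \ C ∈ B := by
  have := hB.inter_mem _ hA _ (hB.compl_mem _ hC)
  simpa [Set.diff_eq] using this

lemma biInter_mem (hB : IsSetAlg B) (s : Finset ℕ) (f : ℕ → Set X)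
    (h : ∀ i ∈ s, f i ∈ B) : ⋂ i ∈ s, f i ∈ B := by
  classical
  induction s using Finset.induction_on with
  | empty => simpa using hB.univ_mem
  | @insert a s _ ih =>
      rw [Finset.set_biInter_insert]
      exact hB.inter_mem _ (h a (Finset.mem_insert_self a s)) _
        (ih fun i hi => h i (Finset.mem_insert_of_mem hi))

lemma P_empty (hB : IsSetAlg B) (hP : IsProbPre B P) : P ∅ = 0 := by
  have h := hP.countably_add (fun _ => (∅ : Set X)) (fun _ => empty_mem hB)
    (fun m n _ => by simp) (by simpa using empty_mem hB)
  simp only [Set.iUnion_empty] at h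
  have h2 := h.summable.tendsto_cofinite_zero
  rw [Nat.cofinite_eq_atTop] at h2
  exact tendsto_nhds_unique tendsto_const_nhds h2

lemma P_nonneg (hP : IsProbPre B P) {A : Set X} (hA : A ∈ B) : 0 ≤ P A :=
  (hP.mem_Icc A hA).1

lemma P_add (hB : IsSetAlg B) (hP : IsProbPre B P) {A C : Set X}
    (hA : A ∈ B) (hC : C ∈ B) (hd : Disjoint A C) : P (A ∪ C) = P A + P C := by
  classical
  set s : ℕ → Set X := fun k => if k = 0 then A else if k = 1 then C else ∅ with hs
  have hmem : ∀ k, s k ∈ B := by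
    intro k
    simp only [hs]
    split_ifs
    · exact hA
    · exact hC
    · exact empty_mem hB
  have hdis : ∀ m n, m ≠ n → Disjoint (s m) (s n) := by
    intro m n hmn
    simp only [hs]
    split_ifs <;>
      first
        | (exfalso; omega)
        | exact hd
        | exact hd.symm
        | simp
  have hU : (⋃ k, s k) = A ∪ C := by
    apply Set.Subset.antisymm
    · refine Set.iUnion_subset fun k => ?_
      simp only [hs]
      split_ifs
      · exact Set.subset_union_left
      · exact Set.subset_union_right
      · exact Set.empty_subset _
    · rintro x (hx | hx)
      · exact Set.mem_iUnion.2 ⟨0, by simp [hs, hx]⟩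
      · exact Set.mem_iUnion.2 ⟨1, by simp [hs, hx]⟩
  have h := hP.countably_add s hmem hdis (hU ▸ union_mem hB hA hC)
  rw [hU] at h
  have h2 : HasSum (fun k => P (s k)) (P A + P C) := by
    have h0 : ∀ k ∉ ({0, 1} : Finset ℕ), P (s k) = 0 := by
      intro k hk
      simp only [Finset.mem_insert, Finset.mem_singleton] at hk
      push_neg at hk
      have : s k = ∅ := by simp [hs, hk.1, hk.2]
      rw [this, P_empty hB hP]
    have h1 := hasSum_sum_of_ne_finset_zero (L := SummationFilter.unconditional ℕ) h0
    have : ∑ k ∈ ({0, 1} : Finset ℕ), P (s k) = P A + P C := by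
      rw [Finset.sum_pair (by norm_num : (0 : ℕ) ≠ 1)]
      simp [hs]
    rwa [this] at h1
  exact h.unique h2

lemma P_mono (hB : IsSetAlg B) (hP : IsProbPre B P) {A C : Set X}
    (hA : A ∈ B) (hC : C ∈ B) (hsub : A ⊆ C) : P A ≤ P C := by
  have hd : Disjoint A (C \ A) := Set.disjoint_sdiff_right
  have h := P_add hB hP hA (diff_mem hB hC hA) hd
  rw [Set.union_diff_cancel hsub] at h
  have := P_nonneg hP (diff_mem hB hC hA)
  linarith

/-- The pre-outer-measure used for the Carathéodory construction. -/
noncomputable def m0 (B : Set (Set X)) (P : Set X → ℝ) : Set X → ℝ≥0∞ :=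
  fun A => ⨅ _ : A ∈ B, ENNReal.ofReal (P A)

lemma m0_of_mem {A : Set X} (hA : A ∈ B) : m0 B P A = ENNReal.ofReal (P A) :=
  iInf_pos hA

lemma m0_of_not_mem {A : Set X} (hA : A ∉ B) : m0 B P A = ⊤ :=
  iInf_neg hA

lemma m0_empty (hB : IsSetAlg B) (hP : IsProbPre B P) : m0 B P ∅ = 0 := by
  rw [m0_of_mem (empty_mem hB), P_empty hB hP, ENNReal.ofReal_zero]

/-- Existence of a countably additive extension of `P` to the generated σ-algebra. -/
lemma exists_measure (hB : IsSetAlg B) (hP : IsProbPre B P) :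
    ∃ μ : @Measure X (.generateFrom B), ∀ A ∈ B, μ A = ENNReal.ofReal (P A) := by
  classical
  letI mX : MeasurableSpace X := .generateFrom B
  set ν : OuterMeasure X := OuterMeasure.ofFunction (m0 B P) (m0_empty hB hP) with hν
  -- ν extends P on B
  have hle : ∀ A ∈ B, ν A ≤ ENNReal.ofReal (P A) := by
    intro A hA
    have := OuterMeasure.ofFunction_le (m := m0 B P) (m_empty := m0_empty hB hP) A
    rwa [m0_of_mem hA] at this
  have hge : ∀ A ∈ B, ENNReal.ofReal (P A) ≤ ν A := by
    intro A hA
    rw [hν, OuterMeasure.ofFunction_apply]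
    refine le_iInf fun t => le_iInf fun hcov => ?_
    by_cases hall : ∀ n, t n ∈ B
    · -- disjointify the cover inside A
      set D : ℕ → Set X := fun n => (A ∩ t n) ∩ ⋂ m ∈ Finset.range n, (t m)ᶜ with hD
      have hDmem : ∀ n, D n ∈ B := fun n =>
        hB.inter_mem _ (hB.inter_mem _ hA _ (hall n)) _
          (biInter_mem hB _ _ fun m _ => hB.compl_mem _ (hall m))
      have hDsub : ∀ n, D n ⊆ t n := fun n x hx => hx.1.2
      have hDsubA : ∀ n, D n ⊆ A := fun n x hx => hx.1.1
      have hkey : ∀ m n, m < n → Disjoint (D m) (D n) := by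
        intro m n hmn
        refine Set.disjoint_left.2 fun x hxm hxn => ?_
        have hxc : x ∈ (t m)ᶜ :=
          (Set.mem_iInter₂.1 hxn.2) m (Finset.mem_range.2 hmn)
        exact hxc (hDsub m hxm)
      have hDdis : ∀ m n, m ≠ n → Disjoint (D m) (D n) := by
        intro m n hmn
        rcases lt_or_gt_of_ne hmn with h | h
        · exact hkey m n h
        · exact (hkey n m h).symm
      have hDun : (⋃ n, D n) = A := by
        apply Set.Subset.antisymm (Set.iUnion_subset hDsubA)
        intro x hx
        have hex : ∃ n, x ∈ t n := Set.mem_iUnion.1 (hcov hx)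
        refine Set.mem_iUnion.2 ⟨Nat.find hex, ⟨⟨hx, Nat.find_spec hex⟩, ?_⟩⟩
        refine Set.mem_iInter₂.2 fun m hm hxm => ?_
        exact Nat.find_min hex (Finset.mem_range.1 hm) hxm
      have hsum := hP.countably_add D hDmem hDdis (hDun ▸ hA)
      rw [hDun] at hsum
      have hnn : ∀ n, 0 ≤ P (D n) := fun n => P_nonneg hP (hDmem n)
      calc ENNReal.ofReal (P A) = ∑' n, ENNReal.ofReal (P (D n)) := by
            rw [← hsum.tsum_eq, ENNReal.ofReal_tsum_of_nonneg hnn hsum.summable]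
        _ ≤ ∑' n, m0 B P (t n) := by
            refine ENNReal.tsum_le_tsum fun n => ?_
            rw [m0_of_mem (hall n)]
            exact ENNReal.ofReal_le_ofReal (P_mono hB hP (hDmem n) (hall n) (hDsub n))
    · push_neg at hall
      obtain ⟨n, hn⟩ := hall
      have htop : m0 B P (t n) = ⊤ := m0_of_not_mem hn
      have := ENNReal.le_tsum (f := fun n => m0 B P (t n)) n
      rw [htop] at this
      exact le_trans le_top this
  have hext : ∀ A ∈ B, ν A = ENNReal.ofReal (P A) := fun A hA =>
    le_antisymm (hle A hA) (hge A hA)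
  -- B sets are Carathéodory measurable
  have hcar : ∀ A ∈ B, ν.IsCaratheodory A := by
    intro A hA
    apply OuterMeasure.ofFunction_caratheodory
    intro t
    by_cases ht : t ∈ B
    · have h1 : t ∩ A ∈ B := hB.inter_mem _ ht _ hA
      have h2 : t \ A ∈ B := diff_mem hB ht hA
      rw [m0_of_mem ht, m0_of_mem h1, m0_of_mem h2]
      rw [← ENNReal.ofReal_add (P_nonneg hP h1) (P_nonneg hP h2)]
      apply ENNReal.ofReal_le_ofReal
      have hd : Disjoint (t ∩ A) (t \ A) :=
        Set.disjoint_sdiff_right.mono_left Set.inter_subset_right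
      rw [← P_add hB hP h1 h2 hd, Set.inter_union_diff]
    · rw [m0_of_not_mem ht]
      exact le_top
  have hms : mX ≤ ν.caratheodory := by
    refine MeasurableSpace.generateFrom_le fun A hA => ?_
    exact (OuterMeasure.isCaratheodory_iff ν).2 (hcar A hA)
  refine ⟨ν.toMeasure hms, fun A hA => ?_⟩
  rw [MeasureTheory.toMeasure_apply ν hms (MeasurableSpace.measurableSet_generateFrom hA)]
  exact hext A hA

section WithMeasure

variable [mX : MeasurableSpace X]

lemma measurable_of_preMble (hBm : ∀ A ∈ B, MeasurableSet A)
    {f : X → ℝ} (hf : PreMble B f) : Measurable f := by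
  have hbor : (Real.measurableSpace : MeasurableSpace ℝ)
      = .generateFrom (Set.range Set.Iio) := borel_eq_generateFrom_Iio ℝ
  rw [show (Real.measurableSpace : MeasurableSpace ℝ)
      = .generateFrom (Set.range Set.Iio) from hbor]
  refine measurable_generateFrom fun t ht => ?_
  obtain ⟨b, rfl⟩ := ht
  have hpre : f ⁻¹' Set.Iio b = f ⁻¹' Set.Ioo (-1) b := by
    ext x
    simp only [Set.mem_preimage, Set.mem_Iio, Set.mem_Ioo]
    exact ⟨fun h => ⟨lt_of_lt_of_le (by norm_num) (hf.1 x).1, h⟩, fun h => h.2⟩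
  rw [hpre]
  exact hBm _ (hf.2 _ (InGenAlg.basic _ ⟨-1, b, rfl⟩))

variable (μ : Measure X)

lemma lint_simple (hBm : ∀ A ∈ B, MeasurableSet A) {n : ℕ}
    (a : Fin n → ℝ) (A : Fin n → Set X) (ha : ∀ k, a k ∈ Set.Icc (0 : ℝ) 1)
    (hA : ∀ k, A k ∈ B) :
    ∫⁻ x, ENNReal.ofReal (simpleVal a A x) ∂μ
      = ∑ k, ENNReal.ofReal (a k) * μ (A k) := by
  have heq : ∀ x, ENNReal.ofReal (simpleVal a A x)
      = ∑ k, ENNReal.ofReal (a k) * (A k).indicator (fun _ => (1 : ℝ≥0∞)) x := by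
    intro x
    rw [simpleVal, ENNReal.ofReal_sum_of_nonneg (fun k _ =>
      mul_nonneg (ha k).1 (Set.indicator_nonneg (by simp) x))]
    refine Finset.sum_congr rfl fun k _ => ?_
    rw [ENNReal.ofReal_mul (ha k).1]
    congr 1
    by_cases hx : x ∈ A k <;> simp [hx]
  simp_rw [heq]
  rw [lintegral_finset_sum _ (fun k _ =>
    (measurable_const.indicator (hBm _ (hA k))).const_mul _)]
  refine Finset.sum_congr rfl fun k _ => ?_
  rw [lintegral_const_mul _ (measurable_const.indicator (hBm _ (hA k)))]
  congr 1
  exact lintegral_indicator_one (hBm _ (hA k))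

lemma ofReal_JRep (hP : IsProbPre B P) (hBm : ∀ A ∈ B, MeasurableSet A)
    (hμ : ∀ A ∈ B, μ A = ENNReal.ofReal (P A)) {n : ℕ}
    (a : Fin n → ℝ) (A : Fin n → Set X) (ha : ∀ k, a k ∈ Set.Icc (0 : ℝ) 1)
    (hA : ∀ k, A k ∈ B) :
    ENNReal.ofReal (JRep P a A) = ∫⁻ x, ENNReal.ofReal (simpleVal a A x) ∂μ := by
  rw [lint_simple μ hBm a A ha hA, JRep, ENNReal.ofReal_sum_of_nonneg (fun k _ =>
    mul_nonneg (ha k).1 (P_nonneg hP (hA k)))]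
  refine Finset.sum_congr rfl fun k _ => ?_
  rw [ENNReal.ofReal_mul (ha k).1, hμ _ (hA k)]

lemma JRep_nonneg (hP : IsProbPre B P) {n : ℕ}
    (a : Fin n → ℝ) (A : Fin n → Set X) (ha : ∀ k, a k ∈ Set.Icc (0 : ℝ) 1)
    (hA : ∀ k, A k ∈ B) : 0 ≤ JRep P a A :=
  Finset.sum_nonneg fun k _ => mul_nonneg (ha k).1 (P_nonneg hP (hA k))

/-- The key identity: the lower integral equals the Lebesgue integral w.r.t. the
extension measure. -/
lemma Ilow_eq_lintegral (hB : IsSetAlg B) (hP : IsProbPre B P)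
    (hBm : ∀ A ∈ B, MeasurableSet A)
    (hμ : ∀ A ∈ B, μ A = ENNReal.ofReal (P A))
    {f : X → ℝ} (hf : PreMble B f) :
    Ilow B P f = (∫⁻ x, ENNReal.ofReal (f x) ∂μ).toReal := by
  classical
  set L : ℝ≥0∞ := ∫⁻ x, ENNReal.ofReal (f x) ∂μ with hL
  have hμuniv : μ Set.univ = 1 := by
    rw [hμ _ hB.univ_mem, hP.univ_one, ENNReal.ofReal_one]
  have hL1 : L ≤ 1 := by
    calc L ≤ ∫⁻ _, (1 : ℝ≥0∞) ∂μ :=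
          lintegral_mono fun x => ENNReal.ofReal_le_one.2 (hf.1 x).2
      _ = 1 := by rw [lintegral_one, hμuniv]
  have hLne : L ≠ ⊤ := ne_top_of_le_ne_top ENNReal.one_ne_top hL1
  -- the defining set
  rw [Ilow]
  set S : Set ℝ := {r | ∃ (n : ℕ) (a : Fin n → ℝ) (A : Fin n → Set X),
    (∀ k, a k ∈ Set.Icc (0 : ℝ) 1) ∧ (∀ k, A k ∈ B) ∧
    (∀ x, simpleVal a A x ≤ f x) ∧ r = JRep P a A} with hS
  have hub : ∀ r ∈ S, r ≤ L.toReal := by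
    rintro r ⟨n, a, A, ha, hA, hle, rfl⟩
    have h1 := ofReal_JRep μ hP hBm hμ a A ha hA
    have h2 : ∫⁻ x, ENNReal.ofReal (simpleVal a A x) ∂μ ≤ L :=
      lintegral_mono fun x => ENNReal.ofReal_le_ofReal (hle x)
    exact (ENNReal.ofReal_le_iff_le_toReal hLne).1 (h1 ▸ h2)
  have hmem0 : (0 : ℝ) ∈ S := by
    refine ⟨0, Fin.elim0, Fin.elim0, fun k => k.elim0, fun k => k.elim0,
      fun x => ?_, by simp [JRep]⟩
    simpa [simpleVal] using (hf.1 x).1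
  have hSne : S.Nonempty := ⟨0, hmem0⟩
  have hSbdd : BddAbove S := ⟨L.toReal, hub⟩
  refine le_antisymm (csSup_le hSne hub) ?_
  -- lower bound: layer approximations
  have hstep : ∀ N : ℕ, L.toReal ≤ sSup S + 1 / ((N : ℝ) + 1) := by
    intro N
    set c : ℝ := 1 / (N + 1 : ℝ) with hc
    have hcpos : 0 < c := by positivity
    set a : Fin (N + 1) → ℝ := fun _ => c with haa
    set A : Fin (N + 1) → Set X :=
      fun j => f ⁻¹' (Set.Ioo (-1) (((j : ℕ) + 1) / (N + 1)))ᶜ with hAA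
    have hA : ∀ j, A j ∈ B := fun j =>
      hf.2 _ (InGenAlg.compl _ (InGenAlg.basic _ ⟨-1, _, rfl⟩))
    have ha : ∀ j, a j ∈ Set.Icc (0 : ℝ) 1 := by
      intro j
      simp only [haa, hc]
      constructor
      · positivity
      · rw [div_le_one (by positivity)]
        linarith [Nat.cast_nonneg (α := ℝ) N]
    have hmemA : ∀ (x) (j : Fin (N + 1)),
        x ∈ A j ↔ ((j : ℕ) + 1 : ℝ) / (N + 1) ≤ f x := by
      intro x j
      simp only [hAA, Set.mem_preimage, Set.mem_compl_iff, Set.mem_Ioo, not_and, not_lt]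
      constructor
      · intro h
        exact h (lt_of_lt_of_le (by norm_num) (hf.1 x).1)
      · intro h _
        exact h
    -- the value of the layer function
    have hval : ∀ x, simpleVal a A x = (⌊(N + 1 : ℝ) * f x⌋₊ : ℝ) / (N + 1) := by
      intro x
      set k : ℕ := ⌊(N + 1 : ℝ) * f x⌋₊ with hk
      have hfx0 : (0 : ℝ) ≤ f x := (hf.1 x).1
      have hNk : k ≤ N + 1 := by
        have : (N + 1 : ℝ) * f x ≤ (N + 1 : ℝ) * 1 :=
          mul_le_mul_of_nonneg_left (hf.1 x).2 (by positivity)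
        calc k ≤ ⌊(N + 1 : ℝ)⌋₊ := Nat.floor_le_floor (by linarith)
          _ = N + 1 := by exact_mod_cast Nat.floor_natCast (N + 1)
      have hind : ∀ j : Fin (N + 1),
          (A j).indicator (fun _ => (1 : ℝ)) x = if (j : ℕ) < k then 1 else 0 := by
        intro j
        have hiff : x ∈ A j ↔ (j : ℕ) < k := by
          rw [hmemA x j]
          rw [div_le_iff₀ (by positivity), mul_comm (f x)]
          rw [show ((j : ℕ) + 1 : ℝ) = (((j : ℕ) + 1 : ℕ) : ℝ) by push_cast; ring]
          rw [← Nat.le_floor_iff (mul_nonneg (by positivity) hfx0)]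
          omega
        by_cases hx : x ∈ A j
        · rw [Set.indicator_of_mem hx, if_pos (hiff.1 hx)]
        · rw [Set.indicator_of_notMem hx, if_neg (fun h => hx (hiff.2 h))]
      rw [simpleVal]
      simp_rw [hind]
      rw [haa]
      simp only [mul_ite, mul_one, mul_zero]
      rw [Fin.sum_univ_eq_sum_range (fun j => if j < k then c else 0)]
      have hfilter : (Finset.range (N + 1)).filter (fun j => j < k) = Finset.range k := by
        ext j
        simp only [Finset.mem_filter, Finset.mem_range]
        omega
      rw [← Finset.sum_filter, hfilter, Finset.sum_const, Finset.card_range,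
        nsmul_eq_mul, hc]
      field_simp
    have hsle : ∀ x, simpleVal a A x ≤ f x := by
      intro x
      rw [hval x, div_le_iff₀ (by positivity : (0:ℝ) < (N:ℝ) + 1)]
      have h1 : (⌊(N + 1 : ℝ) * f x⌋₊ : ℝ) ≤ (N + 1 : ℝ) * f x :=
        Nat.floor_le (mul_nonneg (by positivity) (hf.1 x).1)
      linarith
    have hlef : ∀ x, f x ≤ simpleVal a A x + c := by
      intro x
      rw [hval x, hc, ← add_div, le_div_iff₀ (by positivity : (0:ℝ) < (N:ℝ) + 1)]
      have h1 : (N + 1 : ℝ) * f x < ⌊(N + 1 : ℝ) * f x⌋₊ + 1 :=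
        Nat.lt_floor_add_one _
      linarith
    have hJmem : JRep P a A ∈ S := ⟨N + 1, a, A, ha, hA, hsle, rfl⟩
    have hJle : JRep P a A ≤ sSup S := le_csSup hSbdd hJmem
    have hsnn : ∀ x, 0 ≤ simpleVal a A x := by
      intro x
      rw [hval x]
      positivity
    have hLle : L ≤ ENNReal.ofReal (JRep P a A) + ENNReal.ofReal c := by
      have h1 := ofReal_JRep μ hP hBm hμ a A ha hA
      calc L ≤ ∫⁻ x, (ENNReal.ofReal (simpleVal a A x) + ENNReal.ofReal c) ∂μ := by
            refine lintegral_mono fun x => ?_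
            rw [← ENNReal.ofReal_add (hsnn x) hcpos.le]
            exact ENNReal.ofReal_le_ofReal (hlef x)
        _ = (∫⁻ x, ENNReal.ofReal (simpleVal a A x) ∂μ) + ENNReal.ofReal c := by
            rw [lintegral_add_right _ measurable_const, lintegral_const, hμuniv, mul_one]
        _ = ENNReal.ofReal (JRep P a A) + ENNReal.ofReal c := by rw [h1]
    have h2 := ENNReal.toReal_mono (ENNReal.add_ne_top.2 ⟨ENNReal.ofReal_ne_top, ENNReal.ofReal_ne_top⟩) hLle
    rw [ENNReal.toReal_add ENNReal.ofReal_ne_top ENNReal.ofReal_ne_top,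
      ENNReal.toReal_ofReal (JRep_nonneg hP a A ha hA),
      ENNReal.toReal_ofReal hcpos.le] at h2
    calc L.toReal ≤ JRep P a A + c := h2
      _ ≤ sSup S + 1 / ((N : ℝ) + 1) := by rw [← hc]; linarith
  have htend : Tendsto (fun N : ℕ => sSup S + 1 / ((N : ℝ) + 1)) atTop
      (𝓝 (sSup S)) := by
    have := tendsto_one_div_add_atTop_nhds_zero_nat (𝕜 := ℝ)
    simpa using tendsto_const_nhds.add this
  exact ge_of_tendsto' htend hstep

end WithMeasure

end IlowAux

/-- For a probability premeasure `P` and premeasurable maps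
`f n : X → [0,1]` whose pointwise sum `g = ∑ₙ f n` is also a premeasurable map
into `[0,1]`, one has `I_P g = ∑ₙ I_P (f n)`. -/
theorem Ilow_hasSum (B : Set (Set X)) (hB : IsSetAlg B)
    (P : Set X → ℝ) (hP : IsProbPre B P)
    (f : ℕ → X → ℝ) (hfn : ∀ n, PreMble B (f n))
    (g : X → ℝ) (hg : PreMble B g)
    (hsum : ∀ x, HasSum (fun n => f n x) (g x)) :
    HasSum (fun n => Ilow B P (f n)) (Ilow B P g) := by
  classical
  letI mX : MeasurableSpace X := .generateFrom B
  obtain ⟨μ, hμ⟩ := IlowAux.exists_measure hB hP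
  have hBm : ∀ A ∈ B, MeasurableSet A := fun A hA =>
    MeasurableSpace.measurableSet_generateFrom hA
  have hmf : ∀ n, Measurable fun x => ENNReal.ofReal (f n x) := fun n =>
    ENNReal.measurable_ofReal.comp (IlowAux.measurable_of_preMble hBm (hfn n))
  have hIg : Ilow B P g = (∫⁻ x, ENNReal.ofReal (g x) ∂μ).toReal :=
    IlowAux.Ilow_eq_lintegral μ hB hP hBm hμ hg
  have hIf : ∀ n, Ilow B P (f n) = (∫⁻ x, ENNReal.ofReal (f n x) ∂μ).toReal := fun n =>
    IlowAux.Ilow_eq_lintegral μ hB hP hBm hμ (hfn n)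
  have hgpt : ∀ x, ENNReal.ofReal (g x) = ∑' n, ENNReal.ofReal (f n x) := fun x => by
    rw [← (hsum x).tsum_eq,
      ENNReal.ofReal_tsum_of_nonneg (fun n => ((hfn n).1 x).1) (hsum x).summable]
  have hkey : ∫⁻ x, ENNReal.ofReal (g x) ∂μ = ∑' n, ∫⁻ x, ENNReal.ofReal (f n x) ∂μ := by
    simp_rw [hgpt]
    exact lintegral_tsum fun n => (hmf n).aemeasurable
  have hμuniv : μ Set.univ = 1 := by
    rw [hμ _ hB.univ_mem, hP.univ_one, ENNReal.ofReal_one]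
  have hfin : ∫⁻ x, ENNReal.ofReal (g x) ∂μ ≠ ⊤ := by
    have h1 : ∫⁻ x, ENNReal.ofReal (g x) ∂μ ≤ 1 := by
      calc ∫⁻ x, ENNReal.ofReal (g x) ∂μ ≤ ∫⁻ _, (1 : ℝ≥0∞) ∂μ :=
            lintegral_mono fun x => ENNReal.ofReal_le_one.2 ((hg.1 x).2)
        _ = 1 := by rw [lintegral_one, hμuniv]
    exact ne_top_of_le_ne_top ENNReal.one_ne_top h1
  have hfin' : (∑' n, ∫⁻ x, ENNReal.ofReal (f n x) ∂μ) ≠ ⊤ := hkey ▸ hfin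
  have h1 := ENNReal.hasSum_toReal hfin'
  rw [← ENNReal.tsum_toReal_eq
    (fun n => ne_top_of_le_ne_top hfin' (ENNReal.le_tsum n))] at h1
  simp_rw [hIf, hIg, hkey]
  exact h1
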